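/- For every natural number n ≥ 2, φ(n)² + ψ(n)² + σ(n)² ≥ 3n² + 2n + 3 and φ(n)ψ(n) + φ(n)σ(n) + σ(n)ψ(n) ≥ 3n² + 2n − 1. -/

import Mathlib

/-- The Dedekind psi function: ψ(p^a) = p^(a-1)(p+1), ψ(1) = 1, multiplicative. -/
def dpsi (n : ℕ) : ℕ := ∏ p ∈ n.primeFactors, p ^ (n.factorization p - 1) * (p + 1)

/-- Sum of divisors function. -/
def sigma1 (n : ℕ) : ℕ := ArithmeticFunction.sigma 1 n

/-!
With `k = v_p(n)`, the local factors of `n`, `φ(n)`, `ψ(n)` and `σ(n)` at `p` are `p^k`,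
`p^k - p^(k-1)`, `p^k + p^(k-1)` and `1 + p + ⋯ + p^k`. Hence `n < ψ(n) ≤ σ(n)`, and
`φ(n) + ψ(n) ≥ 2n` because `s ↦ ∏ (p^k - p^(k-1) + s p^(k-1))` has nonnegative coefficients,
so is convex on `s ≥ 0`, and `φ(n)`, `n`, `ψ(n)` are its values at `s = 0, 1, 2`. The two
inequalities follow from these bounds and `φ(n) ≥ 1` by elementary algebra.
-/

theorem Finset.two_mul_prod_add_le {ι R : Type*} [CommSemiring R] [PartialOrder R]
    [IsOrderedRing R] (s : Finset ι) {a d : ι → R} (ha : ∀ i ∈ s, 0 ≤ a i)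
    (hd : ∀ i ∈ s, 0 ≤ d i) :
    2 * ∏ i ∈ s, (a i + d i) ≤ ∏ i ∈ s, a i + ∏ i ∈ s, (a i + 2 * d i) := by
  classical
  induction s using Finset.induction_on with
  | empty => norm_num
  | insert j s hj ih =>
    rw [Finset.forall_mem_insert] at ha hd
    obtain ⟨haj, ha⟩ := ha
    obtain ⟨hdj, hd⟩ := hd
    have hCB : ∏ i ∈ s, (a i + d i) ≤ ∏ i ∈ s, (a i + 2 * d i) :=
      Finset.prod_le_prod (fun i hi => add_nonneg (ha i hi) (hd i hi))
        fun i hi => add_le_add_right (le_mul_of_one_le_left (hd i hi) one_le_two) _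
    have h2C := ih ha hd
    rw [Finset.prod_insert hj, Finset.prod_insert hj, Finset.prod_insert hj]
    have hdj2 : 0 ≤ 2 * d j := mul_nonneg zero_le_two hdj
    calc 2 * ((a j + d j) * ∏ i ∈ s, (a i + d i))
        = a j * (2 * ∏ i ∈ s, (a i + d i)) + 2 * d j * ∏ i ∈ s, (a i + d i) := by ring
      _ ≤ a j * (∏ i ∈ s, a i + ∏ i ∈ s, (a i + 2 * d i))
          + 2 * d j * ∏ i ∈ s, (a i + 2 * d i) := by gcongr
      _ = a j * ∏ i ∈ s, a i + (a j + 2 * d j) * ∏ i ∈ s, (a i + 2 * d i) := by ring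

lemma factorization_ne_zero_of_mem_primeFactors {n p : ℕ} (hp : p ∈ n.primeFactors) :
    n.factorization p ≠ 0 :=
  Finsupp.mem_support_iff.mp (by rwa [Nat.support_factorization])

lemma pow_sub_one_mul_add_one {R : Type*} [Semiring R] (p : R) {k : ℕ} (hk : k ≠ 0) :
    p ^ (k - 1) * (p + 1) = p ^ k + p ^ (k - 1) := by
  rw [mul_add_one, pow_sub_one_mul hk]

lemma two_mul_le_totient_add_dpsi {n : ℕ} (hn : n ≠ 0) : 2 * n ≤ n.totient + dpsi n := by
  have key := n.primeFactors.two_mul_prod_add_le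
    (a := fun p => p ^ (n.factorization p - 1) * (p - 1))
    (d := fun p => p ^ (n.factorization p - 1)) (fun _ _ => Nat.zero_le _) fun _ _ => Nat.zero_le _
  have hfactor : ∀ p ∈ n.primeFactors,
      p ^ (n.factorization p - 1) * (p - 1) + p ^ (n.factorization p - 1) = p ^ n.factorization p ∧
      p ^ (n.factorization p - 1) * (p - 1) + 2 * p ^ (n.factorization p - 1) =
        p ^ (n.factorization p - 1) * (p + 1) := by
    intro p hp
    have hp1 : 1 ≤ p := (Nat.prime_of_mem_primeFactors hp).one_le
    constructor
    · rw [← pow_sub_one_mul (factorization_ne_zero_of_mem_primeFactors hp) p,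
        ← Nat.mul_add_one, Nat.sub_add_cancel hp1]
    · rw [mul_comm 2, ← Nat.mul_add]
      congr 1
      omega
  rw [Finset.prod_congr rfl fun p hp => (hfactor p hp).1,
    Finset.prod_congr rfl fun p hp => (hfactor p hp).2,
    ← Nat.prod_primeFactors_pow_factorization hn] at key
  rwa [Nat.totient_eq_prod_factorization hn, dpsi]

lemma lt_dpsi {n : ℕ} (hn : 2 ≤ n) : n < dpsi n := by
  conv_lhs => rw [Nat.prod_primeFactors_pow_factorization (by omega : n ≠ 0)]
  refine Finset.prod_lt_prod_of_nonempty (fun p hp => ?_) (fun p hp => ?_)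
    (Nat.nonempty_primeFactors.mpr hn)
  · exact pow_pos (Nat.prime_of_mem_primeFactors hp).pos _
  · rw [pow_sub_one_mul_add_one _ (factorization_ne_zero_of_mem_primeFactors hp)]
    exact Nat.lt_add_of_pos_right (pow_pos (Nat.prime_of_mem_primeFactors hp).pos _)

lemma dpsi_le_sigma1 {n : ℕ} (hn : n ≠ 0) : dpsi n ≤ sigma1 n := by
  rw [sigma1, ArithmeticFunction.sigma_one_apply, Nat.sum_divisors hn, dpsi]
  refine Finset.prod_le_prod' fun p hp => ?_
  have hk := factorization_ne_zero_of_mem_primeFactors hp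
  rw [pow_sub_one_mul_add_one _ hk, add_comm,
    ← Finset.sum_pair (by omega : n.factorization p - 1 ≠ n.factorization p)]
  exact Finset.sum_le_sum_of_subset fun i hi => by
    simp only [Finset.mem_insert, Finset.mem_singleton] at hi
    simp only [Finset.mem_range]
    omega

lemma sq_add_sq_add_sq_lower_bound {n P B C : ℕ} (hP : 1 ≤ P) (hB : n + 1 ≤ B) (hBC : B ≤ C)
    (hPB : 2 * n ≤ P + B) : 3 * n ^ 2 + 2 * n + 3 ≤ P ^ 2 + B ^ 2 + C ^ 2 := by
  have hC : (n + 1) ^ 2 ≤ C ^ 2 := Nat.pow_le_pow_left (hB.trans hBC) 2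
  suffices 2 * n ^ 2 + 2 ≤ P ^ 2 + B ^ 2 by nlinarith
  rcases le_or_gt n P with h | h
  · nlinarith
  · -- `B - P ≥ 2`, so `2 (P² + B²) = (P + B)² + (B - P)² ≥ 4n² + 4`
    zify at *
    nlinarith [sq_nonneg ((B : ℤ) - P - 2)]

lemma mul_add_mul_add_mul_lower_bound {n P B C : ℕ} (hB : n + 1 ≤ B) (hBC : B ≤ C)
    (hPB : 2 * n ≤ P + B) : 3 * n ^ 2 + 2 * n ≤ P * B + P * C + C * B + 1 := by
  -- `PB + PC + CB ≥ B (2P + B) ≥ B (4n - B)`, which is `≥ (n + 1)(3n - 1)` for `n < B < 3n`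
  nlinarith

theorem stmt19 (n : ℕ) (hn : 2 ≤ n) :
    n.totient ^ 2 + dpsi n ^ 2 + sigma1 n ^ 2 ≥ 3 * n ^ 2 + 2 * n + 3 ∧
      n.totient * dpsi n + n.totient * sigma1 n + sigma1 n * dpsi n ≥ 3 * n ^ 2 + 2 * n - 1 := by
  have hn0 : n ≠ 0 := by omega
  have hP : 1 ≤ n.totient := Nat.totient_pos.mpr (by omega)
  have hB : n + 1 ≤ dpsi n := lt_dpsi hn
  have hBC := dpsi_le_sigma1 hn0
  have hPB := two_mul_le_totient_add_dpsi hn0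
  refine ⟨sq_add_sq_add_sq_lower_bound hP hB hBC hPB, ?_⟩
  have := mul_add_mul_add_mul_lower_bound hB hBC hPB
  omega
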